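/- Let σ: ℝ → ℝ be an L-Lipschitz function with σ(0) = 0, applied componentwise to vectors. Let W_1, ..., W_n and Q_1, ..., Q_n be matrices with W_l, Q_l ∈ ℝ^{m_l × m_{l−1}}, and ‖·‖ the matrix 2-norm. Then for every j ∈ {1, ..., n} and every X ∈ ℝ^{m_0}, the hybrid compositions satisfy ‖ W_n σ ··· W_{j+1} σ W_j σ (Q_{j−1} σ ··· σ Q_1 X) − W_n σ ··· W_{j+1} σ Q_j σ (Q_{j−1} σ ··· σ Q_1 X) ‖ ≤ L^{n−1} · ‖W_n‖ ··· ‖W_{j+1}‖ · ‖W_j − Q_j‖ · ‖Q_{j−1}‖ ··· ‖Q_1‖ · ‖X‖, where the hybrid compositions apply σ between consecutive linear maps but not after the outermost matrix W_n. -/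

import Mathlib

open scoped RealInnerProductSpace BigOperators

/-- The matrix 2-norm (operator norm w.r.t. Euclidean norms), i.e. the largest
singular value. -/
noncomputable def opNorm {m n : ℕ} (A : Matrix (Fin m) (Fin n) ℝ) : ℝ :=
  ‖LinearMap.toContinuousLinearMap (Matrix.toEuclideanLin A)‖

/-- The `j`-th column of a matrix, viewed as a vector of `ℝ^m` with the Euclidean norm. -/
noncomputable def matCol {m n : ℕ} (A : Matrix (Fin m) (Fin n) ℝ) (j : Fin n) :
    EuclideanSpace ℝ (Fin m) :=
  WithLp.toLp 2 (fun i => A i j)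

/-- Frame variation `σ(F,p)` of the ordered family `v = e ∘ p`:
`∑_{i=1}^{N-1} ‖v i - v (i+1)‖`. -/
noncomputable def frameVar {E : Type*} [NormedAddCommGroup E] :
    {N : ℕ} → (Fin N → E) → ℝ
  | 0, _ => 0
  | n + 1, v => ∑ i : Fin n, ‖v i.castSucc - v i.succ‖

/-- The midrise quantization alphabet `A^δ_K`. -/
def midrise (δ : ℝ) (K : ℕ) : Set ℝ :=
  {a | ∃ j : Fin (2 * K), a = (-(K : ℝ) + 1 / 2 + (j : ℕ)) * δ}

/-- Componentwise application of a scalar function to a Euclidean vector. -/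
noncomputable def cwMap (σ : ℝ → ℝ) {d : ℕ} (v : EuclideanSpace ℝ (Fin d)) :
    EuclideanSpace ℝ (Fin d) :=
  WithLp.toLp 2 (fun j => σ (v j))

/-- `layerSeq σ m W X i` is the activated output after `i` layers:
`z_0 = X`, `z_{i+1} = σ.(W_i z_i)`. -/
noncomputable def layerSeq (σ : ℝ → ℝ) (m : ℕ → ℕ)
    (W : (i : ℕ) → Matrix (Fin (m (i + 1))) (Fin (m i)) ℝ)
    (X : EuclideanSpace ℝ (Fin (m 0))) : (i : ℕ) → EuclideanSpace ℝ (Fin (m i))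
  | 0 => X
  | i + 1 => cwMap σ (Matrix.toEuclideanLin (W i) (layerSeq σ m W X i))

/-- The `n`-layer feed-forward network `W_n σ(W_{n-1} σ(⋯ σ(W_1 X)⋯))`
(no activation after the last layer, no biases). -/
noncomputable def net (σ : ℝ → ℝ) (m : ℕ → ℕ)
    (W : (i : ℕ) → Matrix (Fin (m (i + 1))) (Fin (m i)) ℝ)
    (n : ℕ) (X : EuclideanSpace ℝ (Fin (m 0))) : EuclideanSpace ℝ (Fin (m n)) :=
  match n with
  | 0 => X
  | k + 1 => Matrix.toEuclideanLin (W k) (layerSeq σ m W X k)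

/-- Componentwise ReLU. -/
noncomputable def relu {d : ℕ} (v : EuclideanSpace ℝ (Fin d)) : EuclideanSpace ℝ (Fin d) :=
  cwMap (fun t => max 0 t) v

/-- A residual block `z(x) = W₂ σ(W₁ x) + x` with ReLU activation `σ`. -/
noncomputable def resBlock {k : ℕ} (W1 W2 : Matrix (Fin k) (Fin k) ℝ)
    (x : EuclideanSpace ℝ (Fin k)) : EuclideanSpace ℝ (Fin k) :=
  Matrix.toEuclideanLin W2 (relu (Matrix.toEuclideanLin W1 x)) + x

/-- Partial compositions of a residual network:
`y_0 = X`, `y_i = z^{[i]} ∘ σ ∘ ⋯ ∘ σ ∘ z^{[1]} (X)`, where block `i` (1-based)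
uses matrices `W1 (i-1)`, `W2 (i-1)`. -/
noncomputable def resPartial {k : ℕ} (W1 W2 : ℕ → Matrix (Fin k) (Fin k) ℝ)
    (X : EuclideanSpace ℝ (Fin k)) : ℕ → EuclideanSpace ℝ (Fin k)
  | 0 => X
  | 1 => resBlock (W1 0) (W2 0) X
  | i + 2 => resBlock (W1 (i + 1)) (W2 (i + 1)) (relu (resPartial W1 W2 X (i + 1)))


lemma toEuclideanLin_apply_le {m n : ℕ} (A : Matrix (Fin m) (Fin n) ℝ)
    (v : EuclideanSpace ℝ (Fin n)) :
    ‖Matrix.toEuclideanLin A v‖ ≤ opNorm A * ‖v‖ := by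
  have h := (LinearMap.toContinuousLinearMap (Matrix.toEuclideanLin A)).le_opNorm v
  simpa [opNorm] using h

lemma opNorm_nonneg' {m n : ℕ} (A : Matrix (Fin m) (Fin n) ℝ) : 0 ≤ opNorm A :=
  norm_nonneg _

lemma hL_nonneg {L : ℝ} {σ : ℝ → ℝ} (hσ : ∀ a b : ℝ, |σ a - σ b| ≤ L * |a - b|) : 0 ≤ L := by
  have h := hσ 1 0
  have h2 := abs_nonneg (σ 1 - σ 0)
  simp at h
  linarith

lemma cwMap_lip {L : ℝ} {σ : ℝ → ℝ} (hσ : ∀ a b : ℝ, |σ a - σ b| ≤ L * |a - b|)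
    {d : ℕ} (v w : EuclideanSpace ℝ (Fin d)) :
    ‖cwMap σ v - cwMap σ w‖ ≤ L * ‖v - w‖ := by
  have hL := hL_nonneg hσ
  rw [EuclideanSpace.norm_eq, EuclideanSpace.norm_eq, ← Real.sqrt_sq hL,
    ← Real.sqrt_mul (by positivity)]
  apply Real.sqrt_le_sqrt
  rw [Finset.mul_sum]
  refine Finset.sum_le_sum fun i _ => ?_
  have h1 : ‖(cwMap σ v - cwMap σ w) i‖ ≤ L * ‖(v - w) i‖ := by
    simpa [cwMap, Real.norm_eq_abs] using hσ (v i) (w i)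
  calc ‖(cwMap σ v - cwMap σ w) i‖ ^ 2 ≤ (L * ‖(v - w) i‖) ^ 2 :=
        pow_le_pow_left₀ (norm_nonneg _) h1 2
    _ = L ^ 2 * ‖(v - w) i‖ ^ 2 := by ring

lemma cwMap_norm_le {L : ℝ} {σ : ℝ → ℝ} (hσ : ∀ a b : ℝ, |σ a - σ b| ≤ L * |a - b|)
    (hσ0 : σ 0 = 0) {d : ℕ} (v : EuclideanSpace ℝ (Fin d)) :
    ‖cwMap σ v‖ ≤ L * ‖v‖ := by
  have h := cwMap_lip hσ v 0
  have h0 : cwMap σ (0 : EuclideanSpace ℝ (Fin d)) = 0 := by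
    ext i; simp [cwMap, hσ0]
  simpa [h0] using h

lemma layerSeq_norm_le {L : ℝ} {σ : ℝ → ℝ} (hσ : ∀ a b : ℝ, |σ a - σ b| ≤ L * |a - b|)
    (hσ0 : σ 0 = 0) (m : ℕ → ℕ)
    (F : (i : ℕ) → Matrix (Fin (m (i + 1))) (Fin (m i)) ℝ)
    (X : EuclideanSpace ℝ (Fin (m 0))) :
    ∀ i : ℕ, ‖layerSeq σ m F X i‖ ≤
      L ^ i * (∏ l ∈ Finset.range i, opNorm (F l)) * ‖X‖ := by
  have hL := hL_nonneg hσ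
  intro i
  induction i with
  | zero => simp [layerSeq]
  | succ i ih =>
    have h1 : ‖layerSeq σ m F X (i + 1)‖ ≤ L * (opNorm (F i) * ‖layerSeq σ m F X i‖) :=
      (cwMap_norm_le hσ hσ0 _).trans (by
        have h := toEuclideanLin_apply_le (F i) (layerSeq σ m F X i)
        gcongr)
    calc ‖layerSeq σ m F X (i + 1)‖ ≤ L * (opNorm (F i) * ‖layerSeq σ m F X i‖) := h1
      _ ≤ L * (opNorm (F i) * (L ^ i * (∏ l ∈ Finset.range i, opNorm (F l)) * ‖X‖)) := by
          have hop := opNorm_nonneg' (F i)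
          gcongr
      _ = L ^ (i + 1) * (∏ l ∈ Finset.range (i + 1), opNorm (F l)) * ‖X‖ := by
          rw [Finset.prod_range_succ]; ring


/-- (the hybrid-composition estimate used in the proof of
Theorem 5.3: the network has `n+1` layers indexed `0, …, n`; layers `< j` use
`Q`, layers `> j` use `W`, and layer `j` uses `W j` on the left and `Q j` on the
right; the paper's `L^{n-1}` is `L^n`). -/
theorem stmt16 (L : ℝ) (σ : ℝ → ℝ)
    (hσ : ∀ a b : ℝ, |σ a - σ b| ≤ L * |a - b|) (hσ0 : σ 0 = 0)
    (n : ℕ) (m : ℕ → ℕ)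
    (W Q : (i : ℕ) → Matrix (Fin (m (i + 1))) (Fin (m i)) ℝ)
    (j : ℕ) (hj : j ≤ n) (X : EuclideanSpace ℝ (Fin (m 0))) :
    ‖net σ m (fun i => if i < j then Q i else W i) (n + 1) X -
        net σ m (fun i => if i ≤ j then Q i else W i) (n + 1) X‖ ≤
      L ^ n * (∏ i ∈ Finset.Ico (j + 1) (n + 1), opNorm (W i)) * opNorm (W j - Q j) *
        (∏ l ∈ Finset.range j, opNorm (Q l)) * ‖X‖ := by
  have hL := hL_nonneg hσ
  set F1 := fun i => if i < j then Q i else W i with hF1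
  set F2 := fun i => if i ≤ j then Q i else W i with hF2
  -- agreement up to j
  have hagree : ∀ i, i ≤ j → layerSeq σ m F1 X i = layerSeq σ m F2 X i := by
    intro i
    induction i with
    | zero => intro _; rfl
    | succ i ih =>
      intro h
      have hi : i < j := h
      have h1 : F1 i = Q i := if_pos hi
      have h2 : F2 i = Q i := if_pos (le_of_lt hi)
      simp only [layerSeq, ih (le_of_lt hi)]
      rw [show F1 i = F2 i from h1.trans h2.symm]
  -- norm of the common part at level j
  have hy : ‖layerSeq σ m F1 X j‖ ≤
      L ^ j * (∏ l ∈ Finset.range j, opNorm (Q l)) * ‖X‖ := by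
    have h := layerSeq_norm_le hσ hσ0 m F1 X j
    have hprod : (∏ l ∈ Finset.range j, opNorm (F1 l)) =
        ∏ l ∈ Finset.range j, opNorm (Q l) := by
      refine Finset.prod_congr rfl fun l hl => ?_
      rw [Finset.mem_range] at hl
      simp [hF1, hl]
    rwa [hprod] at h
  have hQprod : (0:ℝ) ≤ ∏ l ∈ Finset.range j, opNorm (Q l) :=
    Finset.prod_nonneg fun l _ => opNorm_nonneg' _
  -- difference bound for levels i ≥ j+1
  have hdiff : ∀ i, j + 1 ≤ i →
      ‖layerSeq σ m F1 X i - layerSeq σ m F2 X i‖ ≤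
        L ^ i * (∏ l ∈ Finset.Ico (j + 1) i, opNorm (W l)) * opNorm (W j - Q j) *
          (∏ l ∈ Finset.range j, opNorm (Q l)) * ‖X‖ := by
    intro i hi
    induction i, hi using Nat.le_induction with
    | base =>
      have h1 : F1 j = W j := if_neg (lt_irrefl j)
      have h2 : F2 j = Q j := if_pos le_rfl
      have key : layerSeq σ m F1 X (j + 1) - layerSeq σ m F2 X (j + 1) =
          cwMap σ (Matrix.toEuclideanLin (W j) (layerSeq σ m F1 X j)) -
          cwMap σ (Matrix.toEuclideanLin (Q j) (layerSeq σ m F1 X j)) := by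
        simp only [layerSeq, h1, h2, hagree j le_rfl]
      rw [key]
      have hsub : Matrix.toEuclideanLin (W j) (layerSeq σ m F1 X j) -
          Matrix.toEuclideanLin (Q j) (layerSeq σ m F1 X j) =
          Matrix.toEuclideanLin (W j - Q j) (layerSeq σ m F1 X j) := by
        simp [map_sub]
      calc ‖cwMap σ (Matrix.toEuclideanLin (W j) (layerSeq σ m F1 X j)) -
            cwMap σ (Matrix.toEuclideanLin (Q j) (layerSeq σ m F1 X j))‖
          ≤ L * ‖Matrix.toEuclideanLin (W j - Q j) (layerSeq σ m F1 X j)‖ := by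
            have := cwMap_lip hσ (Matrix.toEuclideanLin (W j) (layerSeq σ m F1 X j))
              (Matrix.toEuclideanLin (Q j) (layerSeq σ m F1 X j))
            rwa [hsub] at this
        _ ≤ L * (opNorm (W j - Q j) * ‖layerSeq σ m F1 X j‖) := by
            have h := toEuclideanLin_apply_le (W j - Q j) (layerSeq σ m F1 X j)
            gcongr
        _ ≤ L * (opNorm (W j - Q j) *
              (L ^ j * (∏ l ∈ Finset.range j, opNorm (Q l)) * ‖X‖)) := by
            have hop := opNorm_nonneg' (W j - Q j)
            gcongr
        _ = L ^ (j + 1) * (∏ l ∈ Finset.Ico (j + 1) (j + 1), opNorm (W l)) *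
              opNorm (W j - Q j) * (∏ l ∈ Finset.range j, opNorm (Q l)) * ‖X‖ := by
            simp; ring
    | succ i hi ih =>
      have h1 : F1 i = W i := if_neg (by omega)
      have h2 : F2 i = W i := if_neg (by omega)
      have key : layerSeq σ m F1 X (i + 1) - layerSeq σ m F2 X (i + 1) =
          cwMap σ (Matrix.toEuclideanLin (W i) (layerSeq σ m F1 X i)) -
          cwMap σ (Matrix.toEuclideanLin (W i) (layerSeq σ m F2 X i)) := by
        simp only [layerSeq, h1, h2]
      rw [key]
      have hsub : Matrix.toEuclideanLin (W i) (layerSeq σ m F1 X i) -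
          Matrix.toEuclideanLin (W i) (layerSeq σ m F2 X i) =
          Matrix.toEuclideanLin (W i) (layerSeq σ m F1 X i - layerSeq σ m F2 X i) := by
        simp [map_sub]
      have hWprod : (0:ℝ) ≤ ∏ l ∈ Finset.Ico (j + 1) i, opNorm (W l) :=
        Finset.prod_nonneg fun l _ => opNorm_nonneg' _
      calc ‖cwMap σ (Matrix.toEuclideanLin (W i) (layerSeq σ m F1 X i)) -
            cwMap σ (Matrix.toEuclideanLin (W i) (layerSeq σ m F2 X i))‖
          ≤ L * ‖Matrix.toEuclideanLin (W i) (layerSeq σ m F1 X i - layerSeq σ m F2 X i)‖ := by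
            have := cwMap_lip hσ (Matrix.toEuclideanLin (W i) (layerSeq σ m F1 X i))
              (Matrix.toEuclideanLin (W i) (layerSeq σ m F2 X i))
            rwa [hsub] at this
        _ ≤ L * (opNorm (W i) * ‖layerSeq σ m F1 X i - layerSeq σ m F2 X i‖) := by
            have h := toEuclideanLin_apply_le (W i) (layerSeq σ m F1 X i - layerSeq σ m F2 X i)
            gcongr
        _ ≤ L * (opNorm (W i) * (L ^ i * (∏ l ∈ Finset.Ico (j + 1) i, opNorm (W l)) *
              opNorm (W j - Q j) * (∏ l ∈ Finset.range j, opNorm (Q l)) * ‖X‖)) := by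
            have hop := opNorm_nonneg' (W i)
            gcongr
        _ = L ^ (i + 1) * (∏ l ∈ Finset.Ico (j + 1) (i + 1), opNorm (W l)) *
              opNorm (W j - Q j) * (∏ l ∈ Finset.range j, opNorm (Q l)) * ‖X‖ := by
            rw [Finset.prod_Ico_succ_top hi]; ring
  -- final step
  rcases eq_or_lt_of_le hj with h | h
  · -- n = j
    subst h
    have h1 : F1 j = W j := if_neg (lt_irrefl j)
    have h2 : F2 j = Q j := if_pos le_rfl
    have key : net σ m F1 (j + 1) X - net σ m F2 (j + 1) X =
        Matrix.toEuclideanLin (W j - Q j) (layerSeq σ m F1 X j) := by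
      simp only [net, h1, h2, hagree j le_rfl, map_sub, LinearMap.sub_apply]
    rw [key]
    calc ‖Matrix.toEuclideanLin (W j - Q j) (layerSeq σ m F1 X j)‖
        ≤ opNorm (W j - Q j) * ‖layerSeq σ m F1 X j‖ := toEuclideanLin_apply_le _ _
      _ ≤ opNorm (W j - Q j) * (L ^ j * (∏ l ∈ Finset.range j, opNorm (Q l)) * ‖X‖) := by
          have hop := opNorm_nonneg' (W j - Q j)
          gcongr
      _ = L ^ j * (∏ i ∈ Finset.Ico (j + 1) (j + 1), opNorm (W i)) * opNorm (W j - Q j) *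
            (∏ l ∈ Finset.range j, opNorm (Q l)) * ‖X‖ := by
          simp; ring
  · -- j < n
    have h1 : F1 n = W n := if_neg (by omega)
    have h2 : F2 n = W n := if_neg (by omega)
    have key : net σ m F1 (n + 1) X - net σ m F2 (n + 1) X =
        Matrix.toEuclideanLin (W n) (layerSeq σ m F1 X n - layerSeq σ m F2 X n) := by
      simp only [net, h1, h2, map_sub, LinearMap.sub_apply]
    rw [key]
    have hd := hdiff n (by omega)
    have hWprod : (0:ℝ) ≤ ∏ l ∈ Finset.Ico (j + 1) n, opNorm (W l) :=
      Finset.prod_nonneg fun l _ => opNorm_nonneg' _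
    calc ‖Matrix.toEuclideanLin (W n) (layerSeq σ m F1 X n - layerSeq σ m F2 X n)‖
        ≤ opNorm (W n) * ‖layerSeq σ m F1 X n - layerSeq σ m F2 X n‖ :=
          toEuclideanLin_apply_le _ _
      _ ≤ opNorm (W n) * (L ^ n * (∏ l ∈ Finset.Ico (j + 1) n, opNorm (W l)) *
            opNorm (W j - Q j) * (∏ l ∈ Finset.range j, opNorm (Q l)) * ‖X‖) := by
          have hop := opNorm_nonneg' (W n)
          gcongr
      _ = L ^ n * (∏ i ∈ Finset.Ico (j + 1) (n + 1), opNorm (W i)) * opNorm (W j - Q j) *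
            (∏ l ∈ Finset.range j, opNorm (Q l)) * ‖X‖ := by
          rw [Finset.prod_Ico_succ_top (by omega : j + 1 ≤ n)]; ring
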